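/- arXiv:1006.2022 — 2 statements merged into one kernel-verified Lean document; each statement's English description precedes it below -/
import Mathlib

section
/- Let M1, M2 be independent finite-valued random variables that are jointly independent of the finite-valued sequence S^n = (S_1,…,S_n). Let M12 = f12(M1,S^n), X1^n = f1(M1,S^n), and X2^n = f2(M2,M12) for deterministic functions f12, f1, f2, and let Y^n = (Y_1,…,Y_n) be such that for each i, Y_i is conditionally independent of (M1,M2,M12,S^n,X1^n,X2^n,Y^{i−1}) given (S_i,X_{1,i},X_{2,i}). Then, with U_i = (M12,S^{i−1}), I(M1;Y^n|S^n,M2,M12) ≤ Σ_{i=1}^n I(X_{1,i};Y_i|S_i,X_{2,i},U_i). -/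
open scoped BigOperators Classical
open Finset

namespace Paper

variable {Ω : Type} [Fintype Ω]

/-- `pr μ X a` is the probability that the random variable `X` takes the value `a`
under the pmf `μ` on the finite sample space `Ω`. -/
noncomputable def pr {A : Type} (μ : Ω → ℝ) (X : Ω → A) (a : A) : ℝ :=
  ∑ ω, if X ω = a then μ ω else 0

/-- `μ` is a probability mass function on the finite space `Ω`. -/
def IsPMF (μ : Ω → ℝ) : Prop := (∀ ω, 0 ≤ μ ω) ∧ ∑ ω, μ ω = 1

/-- Shannon entropy (in bits) of the random variable `X` under `μ`. -/
noncomputable def ent {A : Type} [Fintype A] (μ : Ω → ℝ) (X : Ω → A) : ℝ :=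
  -∑ a, pr μ X a * Real.logb 2 (pr μ X a)

/-- Mutual information `I(X;Y)` (in bits) under `μ`. -/
noncomputable def mi {A B : Type} [Fintype A] [Fintype B] (μ : Ω → ℝ)
    (X : Ω → A) (Y : Ω → B) : ℝ :=
  ent μ X + ent μ Y - ent μ (fun ω => (X ω, Y ω))

/-- Conditional mutual information `I(X;Y|Z)` (in bits) under `μ`. -/
noncomputable def cmi {A B C : Type} [Fintype A] [Fintype B] [Fintype C] (μ : Ω → ℝ)
    (X : Ω → A) (Y : Ω → B) (Z : Ω → C) : ℝ :=
  ent μ (fun ω => (X ω, Z ω)) + ent μ (fun ω => (Y ω, Z ω))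
    - ent μ (fun ω => (X ω, Y ω, Z ω)) - ent μ Z

/-- `X` and `Y` are conditionally independent given `Z` under `μ`:
`P(X = a, Y = b | Z = c) = P(X = a | Z = c) · P(Y = b | Z = c)`
whenever `P(Z = c) ≠ 0`. -/
def CondIndep {A B C : Type} (μ : Ω → ℝ) (X : Ω → A) (Y : Ω → B) (Z : Ω → C) : Prop :=
  ∀ a b c, pr μ Z c ≠ 0 →
    pr μ (fun ω => (X ω, Y ω, Z ω)) (a, b, c) * pr μ Z c
      = pr μ (fun ω => (X ω, Z ω)) (a, c) * pr μ (fun ω => (Y ω, Z ω)) (b, c)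

/-!
By the chain rule, `I(M₁;Yⁿ|Sⁿ,M₂,M₁₂) = Σᵢ I(M₁;Yᵢ|Sⁿ,M₂,M₁₂,Yⁱ⁻¹)`. Since `X₂ᵢ` is a
function of `(M₂,M₁₂)`, the condition `(Sⁿ,M₂,M₁₂,Yⁱ⁻¹)` determines `Tᵢ = (Sᵢ,X₂ᵢ,Uᵢ)`, so the
`i`-th term is at most `I(W;Yᵢ|Tᵢ)`, where `W` is everything that precedes `Yᵢ`. Splitting off
`X₁ᵢ`, this is `I(X₁ᵢ;Yᵢ|Tᵢ) + I(W;Yᵢ|X₁ᵢ,Tᵢ)`, and the last term is at most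
`I(W;Yᵢ|Sᵢ,X₁ᵢ,X₂ᵢ) = 0` because `(X₁ᵢ,Tᵢ)` determines `(Sᵢ,X₁ᵢ,X₂ᵢ)`.
-/

lemma sum_mul_logb_div_nonneg {ι : Type} (s : Finset ι) {p q : ι → ℝ} (hp : ∀ i ∈ s, 0 < p i)
    (hq : ∀ i ∈ s, 0 < q i) (h : ∑ i ∈ s, q i ≤ ∑ i ∈ s, p i) :
    0 ≤ ∑ i ∈ s, p i * Real.logb 2 (p i / q i) := by
  have hlog2 : 0 < Real.log 2 := Real.log_pos one_lt_two
  have hterm : ∀ i ∈ s, (p i - q i) / Real.log 2 ≤ p i * Real.logb 2 (p i / q i) := by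
    intro i hi
    have hlog := mul_le_mul_of_nonneg_left
      (Real.log_le_sub_one_of_pos (div_pos (hq i hi) (hp i hi))) (hp i hi).le
    have hinv : Real.log (p i / q i) = -Real.log (q i / p i) := by
      rw [← Real.log_inv, inv_div]
    have hlin : p i * (q i / p i - 1) = q i - p i := by field_simp [(hp i hi).ne']
    rw [Real.logb, ← mul_div_assoc]
    exact div_le_div_of_nonneg_right (by rw [hinv]; linarith) hlog2.le
  calc (0 : ℝ) ≤ (∑ i ∈ s, p i - ∑ i ∈ s, q i) / Real.log 2 := div_nonneg (by linarith) hlog2.le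
    _ = ∑ i ∈ s, (p i - q i) / Real.log 2 := by rw [← Finset.sum_sub_distrib, Finset.sum_div]
    _ ≤ _ := Finset.sum_le_sum hterm

section

variable {A B C D : Type} {μ : Ω → ℝ}

def Determines (X : Ω → A) (Y : Ω → B) : Prop := ∀ ω ω', X ω = X ω' → Y ω = Y ω'

omit [Fintype Ω] in
lemma Determines.pair_eq_iff {X : Ω → A} {Y : Ω → B} (h : Determines X Y) (ω ω' : Ω) :
    (X ω, Y ω) = (X ω', Y ω') ↔ X ω = X ω' := by
  rw [Prod.mk.injEq]
  exact and_iff_left_of_imp (h ω ω')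

lemma pr_nonneg (hμ : IsPMF μ) (X : Ω → A) (a : A) : 0 ≤ pr μ X a :=
  Finset.sum_nonneg fun ω _ => by split_ifs <;> simp [hμ.1 ω]

lemma sum_pr_mul [Fintype A] (X : Ω → A) (g : A → ℝ) :
    ∑ a, pr μ X a * g a = ∑ ω, μ ω * g (X ω) := by
  simp only [pr, Finset.sum_mul, ite_mul, zero_mul]
  rw [Finset.sum_comm]
  simp

lemma sum_pr [Fintype A] (hμ : IsPMF μ) (X : Ω → A) : ∑ a, pr μ X a = 1 := by
  simpa [hμ.2] using sum_pr_mul (μ := μ) X 1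

lemma sum_pr_fst [Fintype A] (X : Ω → A) (Z : Ω → C) (c : C) :
    ∑ a, pr μ (fun ω => (X ω, Z ω)) (a, c) = pr μ Z c := by
  simp only [pr, Prod.mk.injEq]
  rw [Finset.sum_comm]
  refine Finset.sum_congr rfl fun ω _ => ?_
  by_cases h : Z ω = c <;> simp [h]

lemma pr_le_pr_map (hμ : IsPMF μ) (X : Ω → A) (f : A → B) (a : A) :
    pr μ X a ≤ pr μ (fun ω => f (X ω)) (f a) :=
  Finset.sum_le_sum fun ω _ => by
    by_cases h : X ω = a
    · simp [h]
    · simp only [h, if_false]; split_ifs <;> simp [hμ.1 ω]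

lemma pr_pos_marginals_of_ne_zero (hμ : IsPMF μ) (X : Ω → A) (Y : Ω → B) (Z : Ω → C) {x : A × B × C}
    (hx : pr μ (fun ω => (X ω, Y ω, Z ω)) x ≠ 0) :
    0 < pr μ (fun ω => (X ω, Y ω, Z ω)) x ∧ 0 < pr μ (fun ω => (X ω, Z ω)) (x.1, x.2.2) ∧
      0 < pr μ (fun ω => (Y ω, Z ω)) (x.2.1, x.2.2) ∧ 0 < pr μ Z x.2.2 := by
  have hpos := (pr_nonneg hμ _ x).lt_of_ne' hx
  exact ⟨hpos, hpos.trans_le (pr_le_pr_map hμ _ (fun x => (x.1, x.2.2)) x),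
    hpos.trans_le (pr_le_pr_map hμ _ (fun x => (x.2.1, x.2.2)) x),
    hpos.trans_le (pr_le_pr_map hμ _ (fun x => x.2.2) x)⟩

lemma ent_eq_neg_sum [Fintype A] (X : Ω → A) :
    ent μ X = -∑ ω, μ ω * Real.logb 2 (pr μ X (X ω)) := by
  rw [ent, sum_pr_mul X fun a => Real.logb 2 (pr μ X a)]

lemma ent_congr [Fintype A] [Fintype B] {X : Ω → A} {Y : Ω → B}
    (h : ∀ ω ω', X ω = X ω' ↔ Y ω = Y ω') : ent μ X = ent μ Y := by
  have hpr : ∀ ω, pr μ X (X ω) = pr μ Y (Y ω) := fun ω =>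
    Finset.sum_congr rfl fun ω' _ => by rw [h ω' ω]
  simp only [ent_eq_neg_sum, hpr]

variable [Fintype A] [Fintype B] [Fintype C] [Fintype D]

lemma cmi_congr {A' B' C' : Type} [Fintype A'] [Fintype B'] [Fintype C']
    {X : Ω → A} {Y : Ω → B} {Z : Ω → C} {X' : Ω → A'} {Y' : Ω → B'} {Z' : Ω → C'}
    (hX : ∀ ω ω', X ω = X ω' ↔ X' ω = X' ω') (hY : ∀ ω ω', Y ω = Y ω' ↔ Y' ω = Y' ω')
    (hZ : ∀ ω ω', Z ω = Z ω' ↔ Z' ω = Z' ω') : cmi μ X Y Z = cmi μ X' Y' Z' := by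
  have h₁ : ent μ (fun ω => (X ω, Z ω)) = ent μ (fun ω => (X' ω, Z' ω)) :=
    ent_congr fun ω ω' => by simp only [Prod.mk.injEq, hX, hZ]
  have h₂ : ent μ (fun ω => (Y ω, Z ω)) = ent μ (fun ω => (Y' ω, Z' ω)) :=
    ent_congr fun ω ω' => by simp only [Prod.mk.injEq, hY, hZ]
  have h₃ : ent μ (fun ω => (X ω, Y ω, Z ω)) = ent μ (fun ω => (X' ω, Y' ω, Z' ω)) :=
    ent_congr fun ω ω' => by simp only [Prod.mk.injEq, hX, hY, hZ]
  rw [cmi, cmi, h₁, h₂, h₃, ent_congr hZ]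

lemma cmi_comm (X : Ω → A) (Y : Ω → B) (Z : Ω → C) : cmi μ X Y Z = cmi μ Y X Z := by
  have h : ent μ (fun ω => (X ω, Y ω, Z ω)) = ent μ (fun ω => (Y ω, X ω, Z ω)) :=
    ent_congr fun ω ω' => by simp only [Prod.mk.injEq]; tauto
  unfold cmi; rw [h]; ring

lemma cmi_prod_left_eq_add (X : Ω → A) (W : Ω → B) (Y : Ω → D) (Z : Ω → C) :
    cmi μ (fun ω => (X ω, W ω)) Y Z = cmi μ W Y Z + cmi μ X Y (fun ω => (W ω, Z ω)) := by
  have h₁ : ent μ (fun ω => ((X ω, W ω), Z ω)) = ent μ (fun ω => (X ω, W ω, Z ω)) :=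
    ent_congr fun ω ω' => by simp only [Prod.mk.injEq, and_assoc]
  have h₂ : ent μ (fun ω => (W ω, Y ω, Z ω)) = ent μ (fun ω => (Y ω, W ω, Z ω)) :=
    ent_congr fun ω ω' => by simp only [Prod.mk.injEq]; tauto
  have h₃ : ent μ (fun ω => ((X ω, W ω), Y ω, Z ω)) = ent μ (fun ω => (X ω, Y ω, W ω, Z ω)) :=
    ent_congr fun ω ω' => by simp only [Prod.mk.injEq]; tauto
  unfold cmi; rw [h₁, h₂, h₃]; ring

lemma cmi_eq_sum (X : Ω → A) (Y : Ω → B) (Z : Ω → C) :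
    cmi μ X Y Z = ∑ x : A × B × C, pr μ (fun ω => (X ω, Y ω, Z ω)) x *
      (Real.logb 2 (pr μ (fun ω => (X ω, Y ω, Z ω)) x) + Real.logb 2 (pr μ Z x.2.2)
        - Real.logb 2 (pr μ (fun ω => (X ω, Z ω)) (x.1, x.2.2))
        - Real.logb 2 (pr μ (fun ω => (Y ω, Z ω)) (x.2.1, x.2.2))) := by
  rw [sum_pr_mul (fun ω => (X ω, Y ω, Z ω)) fun x => Real.logb 2 _ + _ - _ - _]
  simp only [cmi, ent_eq_neg_sum, mul_add, mul_sub, Finset.sum_add_distrib, Finset.sum_sub_distrib]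
  ring

lemma sum_pr_mul_pr_div (X : Ω → A) (Y : Ω → B) (Z : Ω → C) :
    ∑ x : A × B × C, pr μ (fun ω => (X ω, Z ω)) (x.1, x.2.2)
      * pr μ (fun ω => (Y ω, Z ω)) (x.2.1, x.2.2) / pr μ Z x.2.2 = ∑ c, pr μ Z c := by
  simp only [Fintype.sum_prod_type_right]
  refine Finset.sum_congr rfl fun c _ => ?_
  rw [Finset.sum_comm]
  simp_rw [← Finset.sum_div, ← Finset.sum_mul_sum, sum_pr_fst]
  -- no case split on `pr μ Z c = 0`: there both sides vanish because `x / 0 = 0`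
  exact mul_self_div_self _

lemma cmi_nonneg (hμ : IsPMF μ) (X : Ω → A) (Y : Ω → B) (Z : Ω → C) : 0 ≤ cmi μ X Y Z := by
  rw [cmi_eq_sum]
  set p := pr μ (fun ω => (X ω, Y ω, Z ω))
  set q : A × B × C → ℝ := fun x => pr μ (fun ω => (X ω, Z ω)) (x.1, x.2.2)
      * pr μ (fun ω => (Y ω, Z ω)) (x.2.1, x.2.2) / pr μ Z x.2.2
  have hq : ∀ x, 0 ≤ q x := fun x =>
    div_nonneg (mul_nonneg (pr_nonneg hμ _ _) (pr_nonneg hμ _ _)) (pr_nonneg hμ _ _)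
  set s := Finset.univ.filter fun x => p x ≠ 0
  have hterm : ∀ x ∈ s, p x * (Real.logb 2 (p x) + Real.logb 2 (pr μ Z x.2.2)
      - Real.logb 2 (pr μ (fun ω => (X ω, Z ω)) (x.1, x.2.2))
      - Real.logb 2 (pr μ (fun ω => (Y ω, Z ω)) (x.2.1, x.2.2)))
      = p x * Real.logb 2 (p x / q x) := by
    intro x hx
    obtain ⟨hp, hXZ, hYZ, hZ⟩ := pr_pos_marginals_of_ne_zero hμ X Y Z (Finset.mem_filter.1 hx).2
    rw [Real.logb_div hp.ne' (div_pos (mul_pos hXZ hYZ) hZ).ne',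
      Real.logb_div (mul_pos hXZ hYZ).ne' hZ.ne', Real.logb_mul hXZ.ne' hYZ.ne']
    ring
  have hsum : ∑ x ∈ s, q x ≤ ∑ x ∈ s, p x := calc
    ∑ x ∈ s, q x ≤ ∑ x, q x := Finset.sum_le_univ_sum_of_nonneg hq
    _ = ∑ x, p x := by rw [sum_pr_mul_pr_div, sum_pr hμ, sum_pr hμ]
    _ = ∑ x ∈ s, p x := (Finset.sum_filter_ne_zero _).symm
  rw [← Finset.sum_filter_of_ne (p := fun x => p x ≠ 0)
      fun x _ hx h0 => hx (by rw [h0, zero_mul]),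
    Finset.sum_congr rfl hterm]
  refine sum_mul_logb_div_nonneg s (fun x hx => ?_) (fun x hx => ?_) hsum
  · exact (pr_pos_marginals_of_ne_zero hμ X Y Z (Finset.mem_filter.1 hx).2).1
  · obtain ⟨-, hXZ, hYZ, hZ⟩ := pr_pos_marginals_of_ne_zero hμ X Y Z (Finset.mem_filter.1 hx).2
    exact div_pos (mul_pos hXZ hYZ) hZ

lemma cmi_eq_zero_of_condIndep (hμ : IsPMF μ) {X : Ω → A} {Y : Ω → B} {Z : Ω → C}
    (h : CondIndep μ X Y Z) : cmi μ X Y Z = 0 := by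
  rw [cmi_eq_sum]
  refine Finset.sum_eq_zero fun x _ => ?_
  by_cases hx : pr μ (fun ω => (X ω, Y ω, Z ω)) x = 0
  · rw [hx, zero_mul]
  obtain ⟨hp, hXZ, hYZ, hZ⟩ := pr_pos_marginals_of_ne_zero hμ X Y Z hx
  have hfactor := h x.1 x.2.1 x.2.2 hZ.ne'
  rw [← Real.logb_mul hp.ne' hZ.ne', hfactor, Real.logb_mul hXZ.ne' hYZ.ne']
  ring

lemma ent_prefix_zero {n : ℕ} (V : Ω → D) (Y : Fin n → Ω → B) :
    ent μ (fun ω => (V ω, fun j : {j : Fin n // (j : ℕ) < 0} => Y j.1 ω)) = ent μ V :=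
  ent_congr fun ω ω' => by simp [funext_iff]

lemma ent_prefix_all {n : ℕ} (V : Ω → D) (Y : Fin n → Ω → B) :
    ent μ (fun ω => (V ω, fun j : {j : Fin n // (j : ℕ) < n} => Y j.1 ω))
      = ent μ (fun ω => (V ω, fun i => Y i ω)) :=
  ent_congr fun ω ω' => by simp [funext_iff]

lemma ent_prefix_succ {n : ℕ} (V : Ω → D) (Y : Fin n → Ω → B) (i : Fin n) :
    ent μ (fun ω => (Y i ω, V ω, fun j : {j : Fin n // j < i} => Y j.1 ω))
      = ent μ (fun ω => (V ω, fun j : {j : Fin n // (j : ℕ) < i + 1} => Y j.1 ω)) :=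
  ent_congr fun ω ω' => by
    simp only [Prod.mk.injEq, funext_iff, Subtype.forall, Nat.lt_succ_iff_lt_or_eq, or_imp,
      forall_and, Fin.val_inj, forall_eq, Fin.lt_def]
    tauto

lemma cmi_pi_eq_sum {n : ℕ} (M : Ω → A) (Y : Fin n → Ω → B) (Z : Ω → C) :
    cmi μ M (fun ω i => Y i ω) Z
      = ∑ i : Fin n, cmi μ M (Y i) (fun ω => (Z ω, fun j : {j : Fin n // j < i} => Y j.1 ω)) := by
  -- the `i`-th summand is `(F i - F (i + 1)) + (G (i + 1) - G i)`, so the sum telescopes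
  set F : ℕ → ℝ := fun k =>
    ent μ (fun ω => ((M ω, Z ω), fun j : {j : Fin n // (j : ℕ) < k} => Y j.1 ω))
  set G : ℕ → ℝ := fun k => ent μ (fun ω => (Z ω, fun j : {j : Fin n // (j : ℕ) < k} => Y j.1 ω))
  have hstep : ∀ i : Fin n, cmi μ M (Y i) (fun ω => (Z ω, fun j : {j : Fin n // j < i} => Y j.1 ω))
      = (F i - F (i + 1)) + (G (i + 1) - G i) := by
    intro i
    have hF : ent μ (fun ω => (M ω, Z ω, fun j : {j : Fin n // j < i} => Y j.1 ω)) = F i :=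
      ent_congr fun ω ω' => by simp only [Prod.mk.injEq, and_assoc]; rfl
    have hF' : ent μ (fun ω => (M ω, Y i ω, Z ω, fun j : {j : Fin n // j < i} => Y j.1 ω))
        = F (i + 1) :=
      (ent_congr fun ω ω' => by simp only [Prod.mk.injEq]; tauto).trans
        (ent_prefix_succ (fun ω => (M ω, Z ω)) Y i)
    have hG : ent μ (fun ω => (Z ω, fun j : {j : Fin n // j < i} => Y j.1 ω)) = G i := rfl
    rw [cmi, hF, hF', ent_prefix_succ, hG]
    ring
  have hF0 : F 0 = ent μ (fun ω => (M ω, Z ω)) := ent_prefix_zero _ Y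
  have hG0 : G 0 = ent μ Z := ent_prefix_zero Z Y
  have hFn : F n = ent μ (fun ω => (M ω, (fun i => Y i ω), Z ω)) :=
    (ent_prefix_all _ Y).trans (ent_congr fun ω ω' => by simp only [Prod.mk.injEq]; tauto)
  have hGn : G n = ent μ (fun ω => ((fun i => Y i ω), Z ω)) :=
    (ent_prefix_all Z Y).trans (ent_congr fun ω ω' => by simp only [Prod.mk.injEq]; tauto)
  rw [Finset.sum_congr rfl fun i _ => hstep i, Finset.sum_add_distrib,
    Fin.sum_univ_eq_sum_range (fun k => F k - F (k + 1)),
    Fin.sum_univ_eq_sum_range (fun k => G (k + 1) - G k),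
    Finset.sum_range_sub', Finset.sum_range_sub, hF0, hG0, hFn, hGn, cmi]
  ring

lemma cmi_le_cmi_of_determines_left (hμ : IsPMF μ) {X : Ω → A} {X' : Ω → D}
    (h : Determines X X') (Y : Ω → B) (Z : Ω → C) : cmi μ X' Y Z ≤ cmi μ X Y Z :=
  calc cmi μ X' Y Z ≤ cmi μ X' Y Z + cmi μ X Y (fun ω => (X' ω, Z ω)) :=
        le_add_of_nonneg_right (cmi_nonneg hμ _ _ _)
    _ = cmi μ (fun ω => (X ω, X' ω)) Y Z := (cmi_prod_left_eq_add _ _ _ _).symm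
    _ = cmi μ X Y Z := cmi_congr h.pair_eq_iff (fun _ _ => Iff.rfl) fun _ _ => Iff.rfl

lemma cmi_le_cmi_prod_of_determines (hμ : IsPMF μ) {Z : Ω → C} {T : Ω → D}
    (h : Determines Z T) (X : Ω → A) (Y : Ω → B) :
    cmi μ X Y Z ≤ cmi μ (fun ω => (X ω, Z ω)) Y T :=
  calc cmi μ X Y Z = cmi μ X Y (fun ω => (Z ω, T ω)) :=
        cmi_congr (fun _ _ => Iff.rfl) (fun _ _ => Iff.rfl) fun ω ω' => (h.pair_eq_iff ω ω').symm
    _ ≤ cmi μ Z Y T + cmi μ X Y (fun ω => (Z ω, T ω)) := le_add_of_nonneg_left (cmi_nonneg hμ _ _ _)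
    _ = cmi μ (fun ω => (X ω, Z ω)) Y T := (cmi_prod_left_eq_add _ _ _ _).symm

lemma cmi_eq_add_of_determines {W : Ω → A} {X : Ω → D} (h : Determines W X)
    (Y : Ω → B) (T : Ω → C) :
    cmi μ W Y T = cmi μ X Y T + cmi μ W Y (fun ω => (X ω, T ω)) :=
  (cmi_congr (fun ω ω' => (h.pair_eq_iff ω ω').symm) (fun _ _ => Iff.rfl) fun _ _ => Iff.rfl).trans
    (cmi_prod_left_eq_add W X Y T)

theorem cmi_le_cmi_of_condIndep {E F G : Type} [Fintype E] [Fintype F] [Fintype G]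
    (hμ : IsPMF μ) {M : Ω → A} {Y : Ω → B} {V : Ω → C} {T : Ω → D} {W : Ω → E} {X : Ω → F}
    {Z : Ω → G} (hVT : Determines V T) (hWM : Determines W M) (hWV : Determines W V)
    (hWX : Determines W X) (hXTZ : Determines (fun ω => (X ω, T ω)) Z)
    (hY : CondIndep μ Y W Z) : cmi μ M Y V ≤ cmi μ X Y T := by
  have hWXT : Determines W fun ω => (W ω, X ω, T ω) := fun ω ω' h =>
    Prod.ext h (Prod.ext (hWX ω ω' h) (hVT ω ω' (hWV ω ω' h)))
  calc cmi μ M Y V ≤ cmi μ (fun ω => (M ω, V ω)) Y T := cmi_le_cmi_prod_of_determines hμ hVT M Y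
    _ ≤ cmi μ W Y T :=
        cmi_le_cmi_of_determines_left hμ (fun ω ω' h => Prod.ext (hWM ω ω' h) (hWV ω ω' h)) Y T
    _ = cmi μ X Y T + cmi μ W Y (fun ω => (X ω, T ω)) := cmi_eq_add_of_determines hWX Y T
    _ ≤ cmi μ X Y T + cmi μ (fun ω => (W ω, X ω, T ω)) Y Z :=
        add_le_add le_rfl (cmi_le_cmi_prod_of_determines hμ hXTZ W Y)
    _ ≤ cmi μ X Y T + cmi μ W Y Z := add_le_add le_rfl (cmi_le_cmi_of_determines_left hμ hWXT Y Z)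
    _ = cmi μ X Y T := by rw [cmi_comm W, cmi_eq_zero_of_condIndep hμ hY, add_zero]

end

theorem converse_bound_R1_one_way_general
    {Ω : Type} [Fintype Ω] (μ : Ω → ℝ) (hμ : IsPMF μ)
    {n : ℕ} {𝒮 𝒳₁ 𝒳₂ 𝒴 ℳ₁ ℳ₂ ℳ₁₂ : Type}
    [Fintype 𝒮] [Fintype 𝒳₁] [Fintype 𝒳₂] [Fintype 𝒴]
    [Fintype ℳ₁] [Fintype ℳ₂] [Fintype ℳ₁₂]
    (S : Fin n → Ω → 𝒮) (Y : Fin n → Ω → 𝒴) (M1 : Ω → ℳ₁) (M2 : Ω → ℳ₂)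
    (f2 : ℳ₂ → ℳ₁₂ → Fin n → 𝒳₂) (M12 : Ω → ℳ₁₂) (X1 : Fin n → Ω → 𝒳₁)
    (X2 : Fin n → Ω → 𝒳₂) (hX2 : ∀ i ω, X2 i ω = f2 (M2 ω) (M12 ω) i)
    (hY : ∀ i : Fin n, CondIndep μ (Y i)
      (fun ω => (M1 ω, M2 ω, M12 ω, (fun j => S j ω),
        (fun j => X1 j ω), (fun j => X2 j ω),
        (fun j : {j : Fin n // j < i} => Y j.1 ω)))
      (fun ω => (S i ω, X1 i ω, X2 i ω))) :
    cmi μ M1 (fun ω => fun i => Y i ω)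
        (fun ω => ((fun i => S i ω), M2 ω, M12 ω))
      ≤ ∑ i : Fin n, cmi μ (X1 i) (Y i)
          (fun ω => (S i ω, X2 i ω, M12 ω,
            fun j : {j : Fin n // j < i} => S j.1 ω)) := by
  rw [cmi_pi_eq_sum]
  refine Finset.sum_le_sum fun i _ => cmi_le_cmi_of_condIndep hμ
    (hVT := ?hVT) (hWM := ?hWM) (hWV := ?hWV) (hWX := ?hWX) (hXTZ := ?hXTZ) (hY i)
  case hVT =>
    intro ω ω' h
    simp only [Prod.mk.injEq, funext_iff] at h
    simp only [hX2, h]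
  case hWM => exact fun ω ω' h => (Prod.mk.inj h).1
  case hWV =>
    intro ω ω' h
    simp only [Prod.mk.injEq] at h ⊢
    tauto
  case hWX =>
    intro ω ω' h
    simp only [Prod.mk.injEq, funext_iff] at h
    exact h.2.2.2.2.1 i
  case hXTZ =>
    intro ω ω' h
    simp only [Prod.mk.injEq] at h ⊢
    tauto

/-- Converse step for Theorem 1: with `M₁, M₂` independent of each other and of the
i.i.d.-free sequence `Sⁿ`, `M₁₂ = f₁₂(M₁,Sⁿ)`, `X₁ⁿ = f₁(M₁,Sⁿ)`, `X₂ⁿ = f₂(M₂,M₁₂)`,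
and `Yᵢ` conditionally independent of everything else given `(Sᵢ,X₁ᵢ,X₂ᵢ)`, one has,
with `Uᵢ = (M₁₂,Sⁱ⁻¹)`,
`I(M₁;Yⁿ|Sⁿ,M₂,M₁₂) ≤ Σᵢ I(X₁ᵢ;Yᵢ|Sᵢ,X₂ᵢ,Uᵢ)`. -/
theorem converse_bound_R1_one_way
    {Ω : Type} [Fintype Ω] (μ : Ω → ℝ) (hμ : IsPMF μ)
    {n : ℕ} {𝒮 𝒳₁ 𝒳₂ 𝒴 ℳ₁ ℳ₂ ℳ₁₂ : Type}
    [Fintype 𝒮] [Fintype 𝒳₁] [Fintype 𝒳₂] [Fintype 𝒴]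
    [Fintype ℳ₁] [Fintype ℳ₂] [Fintype ℳ₁₂]
    (S : Fin n → Ω → 𝒮) (Y : Fin n → Ω → 𝒴) (M1 : Ω → ℳ₁) (M2 : Ω → ℳ₂)
    (f12 : ℳ₁ → (Fin n → 𝒮) → ℳ₁₂)
    (f1 : ℳ₁ → (Fin n → 𝒮) → Fin n → 𝒳₁)
    (f2 : ℳ₂ → ℳ₁₂ → Fin n → 𝒳₂)
    (M12 : Ω → ℳ₁₂) (hM12 : ∀ ω, M12 ω = f12 (M1 ω) (fun i => S i ω))
    (X1 : Fin n → Ω → 𝒳₁) (hX1 : ∀ i ω, X1 i ω = f1 (M1 ω) (fun j => S j ω) i)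
    (X2 : Fin n → Ω → 𝒳₂) (hX2 : ∀ i ω, X2 i ω = f2 (M2 ω) (M12 ω) i)
    (hindep : ∀ (m1 : ℳ₁) (m2 : ℳ₂) (s : Fin n → 𝒮),
      pr μ (fun ω => (M1 ω, M2 ω, fun i => S i ω)) (m1, m2, s)
        = pr μ M1 m1 * pr μ M2 m2 * pr μ (fun ω => fun i => S i ω) s)
    (hY : ∀ i : Fin n, CondIndep μ (Y i)
      (fun ω => (M1 ω, M2 ω, M12 ω, (fun j => S j ω),
        (fun j => X1 j ω), (fun j => X2 j ω),
        (fun j : {j : Fin n // j < i} => Y j.1 ω)))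
      (fun ω => (S i ω, X1 i ω, X2 i ω))) :
    cmi μ M1 (fun ω => fun i => Y i ω)
        (fun ω => ((fun i => S i ω), M2 ω, M12 ω))
      ≤ ∑ i : Fin n, cmi μ (X1 i) (Y i)
          (fun ω => (S i ω, X2 i ω, M12 ω,
            fun j : {j : Fin n // j < i} => S j.1 ω)) :=
  converse_bound_R1_one_way_general μ hμ S Y M1 M2 f2 M12 X1 X2 hX2 hY

end Paper
end

section
/- Let the pairs (S_{1,i},S_{2,i}), i = 1,…,n, be i.i.d. finite-valued, let M1 be a finite-valued random variable independent of (S1^n,S2^n), and let M12 = f12(M1,S1^n) for a deterministic function f12. Then for every i ∈ {1,…,n}, S_{2,i} is conditionally independent of (M12, S1^{i−1}, S2_{i+1}^n) given S_{1,i}; that is, the Markov chain (M12, S1^{i−1}, S2_{i+1}^n) − S_{1,i} − S_{2,i} holds. -/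
open scoped BigOperators Classical
open Finset

namespace Paper

variable {Ω : Type} [Fintype Ω]

/-!
Fix `i` and put `W = (M₁, (S₁ⱼ, S₂ⱼ)_{j ≠ i})`. The i.i.d. hypothesis and the independence of `M₁`
make the joint law of `((S₁ᵢ, S₂ᵢ), W)` a product, so `S₂ᵢ` is conditionally independent of `W`
given `S₁ᵢ`. Since `M₁₂ = f₁₂(M₁, S₁ⁿ)`, the tuple `(M₁₂, S₁ⁱ⁻¹, S₂ᵢ₊₁ⁿ)` is a function of `S₁ᵢ`
and `W`, and conditional independence given `Z` is preserved when `W` is replaced by any function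
of `(Z, W)`.
-/

section

variable (μ : Ω → ℝ) {A B C D : Type}

theorem pr_congr_of_iff {X : Ω → A} {Y : Ω → B} {a : A} {b : B} (h : ∀ ω, X ω = a ↔ Y ω = b) :
    pr μ X a = pr μ Y b := by
  simp only [pr, h]

theorem pr_eq_sum_pr_prod [Fintype B] (X : Ω → A) (Y : Ω → B) (a : A) :
    pr μ X a = ∑ b, pr μ (fun ω => (X ω, Y ω)) (a, b) := by
  simp only [pr, Prod.mk.injEq]
  rw [sum_comm]
  refine sum_congr rfl fun ω _ => ?_
  by_cases h : X ω = a <;> simp [h]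

theorem pr_comp_eq_sum [Fintype D] (X : Ω → A) (Z : Ω → C) (W : Ω → D) (g : C → D → B)
    (a : A) (b : B) (c : C) :
    pr μ (fun ω => (X ω, g (Z ω) (W ω), Z ω)) (a, b, c)
      = ∑ d, if g c d = b then pr μ (fun ω => (X ω, W ω, Z ω)) (a, d, c) else 0 := by
  simp only [pr, ite_sum_zero]
  rw [sum_comm]
  refine sum_congr rfl fun ω _ => ?_
  rw [sum_eq_single (W ω) (fun d _ hd => by simp [Ne.symm hd]) (by simp)]
  by_cases hX : X ω = a <;> by_cases hZ : Z ω = c <;> simp [hX, hZ]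

theorem CondIndep.comp [Fintype D] {X : Ω → A} {W : Ω → D} {Z : Ω → C}
    (h : CondIndep μ X W Z) (g : C → D → B) : CondIndep μ X (fun ω => g (Z ω) (W ω)) Z := by
  have hunit : ∀ {E : Type} (Y : Ω → E) (y : E), pr μ (fun ω => ((), Y ω)) ((), y) = pr μ Y y :=
    fun Y y => pr_congr_of_iff μ fun ω => by simp
  intro a b c hc
  rw [pr_comp_eq_sum, ← hunit (fun ω => (g (Z ω) (W ω), Z ω)), pr_comp_eq_sum μ (fun _ => ()),
    sum_mul, mul_sum]
  refine sum_congr rfl fun d _ => ?_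
  split_ifs
  · rw [hunit, h a d c hc]
  · simp

/-- The factors `p` and `r` need not be the marginal laws: the identity defining `CondIndep` is
homogeneous, so normalising constants cancel. -/
theorem condIndep_of_pr_eq_mul [Fintype A] [Fintype D] (Z : Ω → C) (X : Ω → A) (W : Ω → D)
    (p : C × A → ℝ) (r : D → ℝ)
    (h : ∀ c a d, pr μ (fun ω => ((Z ω, X ω), W ω)) ((c, a), d) = p (c, a) * r d) :
    CondIndep μ X W Z := by
  intro a d c _
  have hZX : ∀ a, pr μ (fun ω => (Z ω, X ω)) (c, a) = p (c, a) * ∑ d, r d := by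
    intro a
    rw [pr_eq_sum_pr_prod μ _ W, mul_sum]
    simp only [h]
  have hZ : pr μ Z c = (∑ a, p (c, a)) * ∑ d, r d := by
    rw [pr_eq_sum_pr_prod μ Z X, sum_mul]
    simp only [hZX]
  have hWZ : pr μ (fun ω => (W ω, Z ω)) (d, c) = (∑ a, p (c, a)) * r d := by
    rw [pr_eq_sum_pr_prod μ _ X, sum_mul]
    refine sum_congr rfl fun a _ => ?_
    rw [← h]
    exact pr_congr_of_iff μ fun ω => by simp only [Prod.mk.injEq]; tauto
  have hXWZ : pr μ (fun ω => (X ω, W ω, Z ω)) (a, d, c) = p (c, a) * r d := by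
    rw [← h]
    exact pr_congr_of_iff μ fun ω => by simp only [Prod.mk.injEq]; tauto
  have hXZ : pr μ (fun ω => (X ω, Z ω)) (a, c) = pr μ (fun ω => (Z ω, X ω)) (c, a) :=
    pr_congr_of_iff μ fun ω => by simp only [Prod.mk.injEq]; tauto
  rw [hXWZ, hZ, hXZ, hZX, hWZ]
  ring

theorem pr_funSplitAt_eq_mul {ι M β : Type} [Fintype ι] [DecidableEq ι] (M1 : Ω → M)
    (S : ι → Ω → β) (pM : M → ℝ) (q : β → ℝ)
    (h : ∀ m s, pr μ (fun ω => (M1 ω, fun j => S j ω)) (m, s) = pM m * ∏ j, q (s j))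
    (i : ι) (t : β) (m : M) (r : {j // j ≠ i} → β) :
    pr μ (fun ω => (S i ω, M1 ω, fun j : {j // j ≠ i} => S j ω)) (t, m, r)
      = q t * (pM m * ∏ j, q (r j)) := by
  have hsplit : ∀ ω, (S i ω, M1 ω, fun j : {j // j ≠ i} => S j ω) = (t, m, r) ↔
      (M1 ω, fun j => S j ω) = (m, (Equiv.funSplitAt i β).symm (t, r)) := by
    intro ω
    rw [Prod.ext_iff (x := (M1 ω, _)), Equiv.eq_symm_apply]
    simp only [Equiv.funSplitAt_apply, Prod.mk.injEq]
    tauto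
  rw [pr_congr_of_iff μ hsplit, h, Fintype.prod_eq_mul_prod_subtype_ne _ i]
  have hrest : ∀ j : {j // j ≠ i}, (Equiv.funSplitAt i β).symm (t, r) j = r j := fun j => by
    simp [j.2]
  simp only [hrest, Equiv.funSplitAt_symm_apply, dite_true]
  ring

end

theorem markov_chain_U_S1_S2_general
    {Ω : Type} [Fintype Ω] (μ : Ω → ℝ)
    {n : ℕ} {𝒮₁ 𝒮₂ ℳ₁ ℳ₁₂ : Type}
    [Fintype 𝒮₁] [Fintype 𝒮₂] [Fintype ℳ₁]
    (S1 : Fin n → Ω → 𝒮₁) (S2 : Fin n → Ω → 𝒮₂) (M1 : Ω → ℳ₁)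
    (q : 𝒮₁ × 𝒮₂ → ℝ)
    (hiid : ∀ s : Fin n → 𝒮₁ × 𝒮₂,
      pr μ (fun ω => fun i => (S1 i ω, S2 i ω)) s = ∏ i, q (s i))
    (hindep : ∀ (m : ℳ₁) (s : Fin n → 𝒮₁ × 𝒮₂),
      pr μ (fun ω => (M1 ω, fun i => (S1 i ω, S2 i ω))) (m, s)
        = pr μ M1 m * pr μ (fun ω => fun i => (S1 i ω, S2 i ω)) s)
    (f12 : ℳ₁ → (Fin n → 𝒮₁) → ℳ₁₂)
    (M12 : Ω → ℳ₁₂) (hM12 : ∀ ω, M12 ω = f12 (M1 ω) (fun i => S1 i ω)) :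
    ∀ i : Fin n,
      CondIndep μ (S2 i)
        (fun ω => (M12 ω, (fun j : {j : Fin n // j < i} => S1 j.1 ω),
          (fun j : {j : Fin n // i < j} => S2 j.1 ω)))
        (S1 i) := by
  intro i
  have hlaw : ∀ m s, pr μ (fun ω => (M1 ω, fun j => (S1 j ω, S2 j ω))) (m, s)
      = pr μ M1 m * ∏ j, q (s j) := fun m s => by rw [hindep, hiid]
  have hindep_i : CondIndep μ (S2 i)
      (fun ω => (M1 ω, fun j : {j // j ≠ i} => (S1 j ω, S2 j ω))) (S1 i) :=
    condIndep_of_pr_eq_mul μ (S1 i) (S2 i) _ q (fun w => pr μ M1 w.1 * ∏ j, q (w.2 j))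
      fun c a w => pr_funSplitAt_eq_mul μ M1 (fun j ω => (S1 j ω, S2 j ω)) _ q hlaw i (c, a) w.1 w.2
  convert hindep_i.comp μ fun c w => (f12 w.1 fun j => if h : j = i then c else (w.2 ⟨j, h⟩).1,
    fun j : {j // j < i} => (w.2 ⟨j, j.2.ne⟩).1, fun j : {j // i < j} => (w.2 ⟨j, j.2.ne'⟩).2) with ω
  rw [hM12]
  congr
  funext j
  split_ifs with h
  · rw [h]
  · rfl

/-- Markov chain (44) in the converse of Theorem 2: with `(S₁ᵢ,S₂ᵢ)` i.i.d., `M₁`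
independent of the states and `M₁₂ = f₁₂(M₁,S₁ⁿ)`, for every `i` the chain
`(M₁₂, S₁ⁱ⁻¹, S₂ᵢ₊₁ⁿ) − S₁ᵢ − S₂ᵢ` holds. -/
theorem markov_chain_U_S1_S2
    {Ω : Type} [Fintype Ω] (μ : Ω → ℝ) (hμ : IsPMF μ)
    {n : ℕ} {𝒮₁ 𝒮₂ ℳ₁ ℳ₁₂ : Type}
    [Fintype 𝒮₁] [Fintype 𝒮₂] [Fintype ℳ₁] [Fintype ℳ₁₂]
    (S1 : Fin n → Ω → 𝒮₁) (S2 : Fin n → Ω → 𝒮₂) (M1 : Ω → ℳ₁)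
    (q : 𝒮₁ × 𝒮₂ → ℝ) (hq : IsPMF q)
    (hiid : ∀ s : Fin n → 𝒮₁ × 𝒮₂,
      pr μ (fun ω => fun i => (S1 i ω, S2 i ω)) s = ∏ i, q (s i))
    (hindep : ∀ (m : ℳ₁) (s : Fin n → 𝒮₁ × 𝒮₂),
      pr μ (fun ω => (M1 ω, fun i => (S1 i ω, S2 i ω))) (m, s)
        = pr μ M1 m * pr μ (fun ω => fun i => (S1 i ω, S2 i ω)) s)
    (f12 : ℳ₁ → (Fin n → 𝒮₁) → ℳ₁₂)
    (M12 : Ω → ℳ₁₂) (hM12 : ∀ ω, M12 ω = f12 (M1 ω) (fun i => S1 i ω)) :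
    ∀ i : Fin n,
      CondIndep μ (S2 i)
        (fun ω => (M12 ω, (fun j : {j : Fin n // j < i} => S1 j.1 ω),
          (fun j : {j : Fin n // i < j} => S2 j.1 ω)))
        (S1 i) :=
  markov_chain_U_S1_S2_general μ S1 S2 M1 q hiid hindep f12 M12 hM12

end Paper
end
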